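/- With M1 = [[1,1],[0,1]], M0 = [[1,0],[1,1]], and v = (1,0) a row vector, w = (1,0)^T a column vector, the value v · (M1·M0)^i · w equals F_{2i+1} for all i ≥ 0. Equivalently, the Stern value s([(10)^i]_2) = a([(10)^i]_2 + 1) = F_{2i+1}. -/
import Mathlib


def stern : ℕ → ℕ
  | 0 => 0
  | 1 => 1
  | n + 2 =>
    if (n + 2) % 2 = 0 then stern ((n + 2) / 2)
    else stern ((n + 2) / 2) + stern ((n + 2) / 2 + 1)
decreasing_by all_goals omega

def M1 : Matrix (Fin 2) (Fin 2) ℕ := !![1, 1; 0, 1]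

def M0 : Matrix (Fin 2) (Fin 2) ℕ := !![1, 0; 1, 1]

lemma stern_even (m : ℕ) (hm : 1 ≤ m) : stern (2 * m) = stern m := by
  obtain ⟨k, rfl⟩ := Nat.exists_eq_add_of_le hm
  have h : 2 * (1 + k) = 2 * k + 2 := by ring
  rw [h, stern]
  have : (2 * k + 2) % 2 = 0 := by omega
  rw [if_pos this]
  congr 1
  omega

lemma stern_odd (m : ℕ) (hm : 1 ≤ m) : stern (2 * m + 1) = stern m + stern (m + 1) := by
  obtain ⟨k, rfl⟩ := Nat.exists_eq_add_of_le hm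
  have h : 2 * (1 + k) + 1 = (2 * k + 1) + 2 := by ring
  rw [h, stern]
  have : (2 * k + 1 + 2) % 2 = 1 := by omega
  rw [if_neg (by omega)]
  have h1 : (2 * k + 1 + 2) / 2 = k + 1 := by omega
  rw [h1]
  congr 2 <;> omega

lemma pow_mod3 (i : ℕ) : 2 ^ (2 * i + 1) % 3 = 2 := by
  induction i with
  | zero => rfl
  | succ n ih =>
    have : 2 * (n + 1) + 1 = (2 * n + 1) + 2 := by ring
    rw [this, pow_add]
    omega

lemma stern_pair (i : ℕ) :
    stern ((2 ^ (2 * i + 1) - 2) / 3) = Nat.fib (2 * i) ∧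
    stern ((2 ^ (2 * i + 1) - 2) / 3 + 1) = Nat.fib (2 * i + 1) := by
  induction i with
  | zero => constructor <;> norm_num [stern]
  | succ n ih =>
    obtain ⟨h1, h2⟩ := ih
    obtain ⟨m, hm⟩ : ∃ m, (2 ^ (2 * n + 1) - 2) / 3 = m := ⟨_, rfl⟩
    rw [hm] at h1 h2
    have hmod := pow_mod3 n
    have hpow : 2 ^ (2 * (n + 1) + 1) = 4 * 2 ^ (2 * n + 1) := by
      have : 2 * (n + 1) + 1 = (2 * n + 1) + 2 := by ring
      rw [this, pow_add]; ring
    have hpos : 2 ^ (2 * n + 1) ≥ 2 := by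
      calc 2 ^ (2 * n + 1) ≥ 2 ^ 1 := Nat.pow_le_pow_right (by norm_num) (by omega)
        _ = 2 := rfl
    have hnew : (2 ^ (2 * (n + 1) + 1) - 2) / 3 = 4 * m + 2 := by omega
    rw [hnew]
    have e1 : 4 * m + 2 = 2 * (2 * m + 1) := by ring
    have e2 : 4 * m + 2 + 1 = 2 * (2 * m + 1) + 1 := by ring
    have e3 : 2 * m + 1 + 1 = 2 * (m + 1) := by ring
    have hodd : stern (2 * m + 1) = stern m + stern (m + 1) := by
      rcases Nat.eq_zero_or_pos m with h0 | h0
      · rw [h0]; norm_num [stern]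
      · exact stern_odd m h0
    have f1 : 2 * (n + 1) = 2 * n + 1 + 1 := by ring
    have f2 : 2 * (n + 1) + 1 = 2 * n + 1 + 1 + 1 := by ring
    have g1 : Nat.fib (2 * (n + 1)) = Nat.fib (2 * n) + Nat.fib (2 * n + 1) := by
      rw [f1, Nat.fib_add_two]
    have g2 : Nat.fib (2 * (n + 1) + 1) =
        Nat.fib (2 * n) + 2 * Nat.fib (2 * n + 1) := by
      rw [f2, Nat.fib_add_two, Nat.fib_add_two]; ring
    constructor
    · rw [e1, stern_even _ (by omega), hodd, h1, h2, g1]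
    · rw [e2, stern_odd _ (by omega), e3, stern_even _ (by omega), hodd, h1, h2, g2]
      ring

lemma mat_pow (i : ℕ) :
    ((M1 * M0) ^ i) 0 0 = Nat.fib (2 * i + 1) ∧
    ((M1 * M0) ^ i) 0 1 = Nat.fib (2 * i) ∧
    ((M1 * M0) ^ i) 1 0 = Nat.fib (2 * i) ∧
    ((M1 * M0) ^ i) 1 1 = Nat.fib (2 * i + 1) - Nat.fib (2 * i) := by
  induction i with
  | zero => simp [Matrix.one_apply]
  | succ n ih =>
    obtain ⟨h1, h2, h3, h4⟩ := ih
    have c00 : (M1 * M0) 0 0 = 2 := by simp [M1, M0, Matrix.mul_apply, Fin.sum_univ_two]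
    have c01 : (M1 * M0) 0 1 = 1 := by simp [M1, M0, Matrix.mul_apply, Fin.sum_univ_two]
    have c10 : (M1 * M0) 1 0 = 1 := by simp [M1, M0, Matrix.mul_apply, Fin.sum_univ_two]
    have c11 : (M1 * M0) 1 1 = 1 := by simp [M1, M0, Matrix.mul_apply, Fin.sum_univ_two]
    have hle : Nat.fib (2 * n) ≤ Nat.fib (2 * n + 1) := Nat.fib_le_fib_succ
    have f1 : 2 * (n + 1) = 2 * n + 1 + 1 := by ring
    have f2 : 2 * (n + 1) + 1 = 2 * n + 1 + 1 + 1 := by ring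
    have g1 : Nat.fib (2 * (n + 1)) = Nat.fib (2 * n) + Nat.fib (2 * n + 1) := by
      rw [f1, Nat.fib_add_two]
    have g2 : Nat.fib (2 * (n + 1) + 1) =
        Nat.fib (2 * n + 1) + (Nat.fib (2 * n) + Nat.fib (2 * n + 1)) := by
      rw [f2, Nat.fib_add_two, Nat.fib_add_two]
    have key : ∀ a b : Fin 2, ((M1 * M0) ^ (n + 1)) a b
        = ((M1 * M0) ^ n) a 0 * (M1 * M0) 0 b + ((M1 * M0) ^ n) a 1 * (M1 * M0) 1 b := by
      intro a b
      rw [pow_succ, Matrix.mul_apply, Fin.sum_univ_two]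
    refine ⟨?_, ?_, ?_, ?_⟩ <;>
      rw [key] <;>
      simp only [c00, c01, c10, c11, h1, h2, h3, h4, g1, g2] <;>
      omega

theorem mu_pow_entry_fib (i : ℕ) :
    ((M1 * M0) ^ i) 0 0 = Nat.fib (2 * i + 1) ∧
    stern ((2 ^ (2 * i + 1) - 2) / 3 + 1) = Nat.fib (2 * i + 1) := by
  exact ⟨(mat_pow i).1, (stern_pair i).2⟩
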